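/- arXiv:2109.13992 — 8 statements merged into one kernel-verified Lean document; each statement's English description precedes it below -/
import Mathlib

section
/- If S is a subset of the affine plane F_p^2 with |S| ≥ p+1, then every direction is determined by some pair of distinct points of S, i.e., for every nonzero vector u in F_p^2 there exist distinct points w1, w2 in S with w1 - w2 a scalar multiple of u. -/
/-!
The plane modulo the line `ZMod p ∙ u` has exactly `p` elements, so by pigeonhole two of the
`p + 1` points of `S` lie in the same coset, i.e. their difference is a multiple of `u`.
-/

open Module

theorem Finset.exists_ne_sub_mem_of_natCard_quotient_lt {G : Type*} [AddCommGroup G]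
    {H : AddSubgroup G} [Finite (G ⧸ H)] {S : Finset G} (hS : Nat.card (G ⧸ H) < S.card) :
    ∃ a ∈ S, ∃ b ∈ S, a ≠ b ∧ a - b ∈ H := by
  have : Fintype (G ⧸ H) := Fintype.ofFinite _
  obtain ⟨a, b, hne, hab⟩ := Fintype.exists_ne_map_eq_of_card_lt
    (fun w : S ↦ (w : G ⧸ H)) (by simpa [Nat.card_eq_fintype_card] using hS)
  exact ⟨a, a.2, b, b.2, Subtype.coe_ne_coe.mpr hne, QuotientAddGroup.eq_iff_sub_mem.mp hab⟩

theorem Submodule.natCard_quotient_span_singleton {K V : Type*} [Field K] [AddCommGroup V]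
    [Module K V] [Module.Finite K V] {u : V} (hu : u ≠ 0) :
    Nat.card (V ⧸ K ∙ u) = Nat.card K ^ (finrank K V - 1) := by
  rw [natCard_eq_pow_finrank (K := K), Submodule.finrank_quotient, finrank_span_singleton hu]

theorem stmt_0 (p : ℕ) [Fact p.Prime] (S : Finset (ZMod p × ZMod p))
    (hS : p + 1 ≤ S.card) (u : ZMod p × ZMod p) (hu : u ≠ 0) :
    ∃ w1 ∈ S, ∃ w2 ∈ S, w1 ≠ w2 ∧ ∃ c : ZMod p, w1 - w2 = c • u := by
  have hcard : Nat.card ((ZMod p × ZMod p) ⧸ (ZMod p ∙ u)) = p := by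
    rw [Submodule.natCard_quotient_span_singleton hu, Nat.card_zmod, finrank_prod, finrank_self,
      pow_one]
  obtain ⟨w1, hw1, w2, hw2, hne, hmem⟩ :=
    S.exists_ne_sub_mem_of_natCard_quotient_lt (H := (ZMod p ∙ u).toAddSubgroup)
      (hcard.trans_lt hS)
  obtain ⟨c, hc⟩ := Submodule.mem_span_singleton.mp hmem
  exact ⟨w1, hw1, w2, hw2, hne, c, hc.symm⟩
end

section
/- Let S ⊆ F_p^2 with |S| = kp for some 1 ≤ k ≤ p. If S is equidistributed in at least p-1 directions (i.e., has at most one special direction), then S is a union of k parallel lines. -/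
/-- Number of points of `S` on the line through `x` with direction vector `u`. -/
def lineCount (p : ℕ) [Fact p.Prime] (S : Finset (ZMod p × ZMod p))
    (u x : ZMod p × ZMod p) : ℕ :=
  (S.filter fun w => ∃ t : ZMod p, w = x + t • u).card

/-- Direction vectors of the `p+1` directions: `some m` has slope `m`, `none` is vertical. -/
def dirVec (p : ℕ) : Option (ZMod p) → ZMod p × ZMod p
  | none => (0, 1)
  | some m => (1, m)

/-- `S` is equidistributed in the direction of the vector `u`. -/
def Equidistributed (p : ℕ) [Fact p.Prime] (S : Finset (ZMod p × ZMod p))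
    (u : ZMod p × ZMod p) : Prop :=
  ∀ x y : ZMod p × ZMod p, lineCount p S u x = lineCount p S u y

open Classical in
/-- The set of special (non-equidistributed) directions of `S`. -/
noncomputable def specialDirs (p : ℕ) [Fact p.Prime] (S : Finset (ZMod p × ZMod p)) :
    Finset (Option (ZMod p)) :=
  Finset.univ.filter fun d => ¬ Equidistributed p S (dirVec p d)

/-!
Through a point `x` pass exactly `p + 1` lines, one per direction, and they cover every other
point of the plane exactly once. Hence the counts `|S ∩ ℓ|` over the lines `ℓ ∋ x` add up to
`|S| + p·[x ∈ S]`. A line in an equidistributed direction meets `S` in `k` points, so if all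
directions but `d₀` are equidistributed, the line through `x` in direction `d₀` meets `S` in `p`
or `0` points according as `x ∈ S` or not: `S` is a union of lines of direction `d₀`, and there
are `|S| / p = k` of them.
-/

namespace EquidistributedDirections

open Finset

variable {p : ℕ}

/-- The lines of direction `d` are the level sets of `intercept d`. -/
def intercept : Option (ZMod p) → ZMod p × ZMod p → ZMod p
  | none, x => x.1
  | some m, x => x.2 - m * x.1

def basePoint : Option (ZMod p) → ZMod p → ZMod p × ZMod p
  | none, c => (c, 0)
  | some _, c => (0, c)

@[simp]
lemma intercept_basePoint (d : Option (ZMod p)) (c : ZMod p) :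
    intercept d (basePoint d c) = c := by
  cases d <;> simp [intercept, basePoint]

lemma dirVec_ne_zero [Fact p.Prime] (d : Option (ZMod p)) : dirVec p d ≠ 0 := by
  cases d <;> simp [dirVec]

lemma exists_eq_add_smul_dirVec_iff (d : Option (ZMod p)) (x w : ZMod p × ZMod p) :
    (∃ t : ZMod p, w = x + t • dirVec p d) ↔ intercept d w = intercept d x := by
  obtain ⟨a, b⟩ := w
  obtain ⟨c, e⟩ := x
  cases d with
  | none =>
    simp only [dirVec, intercept, Prod.smul_mk, smul_eq_mul, Prod.mk_add_mk, Prod.mk.injEq,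
      mul_zero, mul_one, add_zero]
    exact ⟨fun ⟨_, h, _⟩ => h, fun h => ⟨b - e, h, by ring⟩⟩
  | some m =>
    simp only [dirVec, intercept, Prod.smul_mk, smul_eq_mul, Prod.mk_add_mk, Prod.mk.injEq,
      mul_one]
    constructor
    · rintro ⟨t, rfl, rfl⟩
      ring
    · exact fun h => ⟨a - c, by ring, by linear_combination h⟩

lemma lineCount_eq_card_filter_intercept [Fact p.Prime] (S : Finset (ZMod p × ZMod p))
    (d : Option (ZMod p)) (x : ZMod p × ZMod p) :
    lineCount p S (dirVec p d) x = #{w ∈ S | intercept d w = intercept d x} :=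
  congrArg Finset.card <| filter_congr fun w _ => exists_eq_add_smul_dirVec_iff d x w

lemma card_filter_intercept_eq [NeZero p] (d : Option (ZMod p)) (c : ZMod p) :
    #{w : ZMod p × ZMod p | intercept d w = c} = p := by
  have hline : ({w | intercept d w = c} : Finset (ZMod p × ZMod p))
      = univ.image fun t : ZMod p => basePoint d c + t • dirVec p d := by
    ext w
    simp only [mem_filter, mem_univ, true_and, mem_image, eq_comm (b := w),
      exists_eq_add_smul_dirVec_iff, intercept_basePoint]
  have hinj : Function.Injective fun t : ZMod p => basePoint d c + t • dirVec p d := by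
    intro s t hst
    cases d
    · simpa [basePoint, dirVec] using congrArg Prod.snd hst
    · simpa [basePoint, dirVec] using congrArg Prod.fst hst
  rw [hline, card_image_of_injective _ hinj, card_univ, ZMod.card]

/-- Two distinct points span a line with exactly one direction. -/
lemma card_filter_intercept_eq_intercept [Fact p.Prime] (w x : ZMod p × ZMod p) :
    #{d : Option (ZMod p) | intercept d w = intercept d x} = if w = x then p + 1 else 1 := by
  split_ifs with hwx
  · simp [hwx]
  rw [card_eq_one]
  by_cases h1 : w.1 = x.1
  · have h2 : w.2 ≠ x.2 := fun h2 => hwx (Prod.ext h1 h2)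
    refine ⟨none, eq_singleton_iff_unique_mem.2 ⟨(mem_filter_univ _).2 h1, ?_⟩⟩
    rintro (_ | m) hm
    · rfl
    · replace hm : w.2 - m * w.1 = x.2 - m * x.1 := (mem_filter_univ (some m)).1 hm
      exact absurd (by linear_combination hm + m * h1) h2
  · have hd : w.1 - x.1 ≠ 0 := sub_ne_zero.mpr h1
    refine ⟨some ((w.2 - x.2) / (w.1 - x.1)), eq_singleton_iff_unique_mem.2 ⟨?_, ?_⟩⟩
    · rw [mem_filter_univ]
      simp only [intercept]
      field_simp
      ring
    · rintro (_ | m) hm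
      · exact absurd ((mem_filter_univ _).1 hm) h1
      · replace hm : w.2 - m * w.1 = x.2 - m * x.1 := (mem_filter_univ (some m)).1 hm
        rw [Option.some.injEq, eq_div_iff hd]
        linear_combination -hm

lemma sum_lineCount [Fact p.Prime] (S : Finset (ZMod p × ZMod p)) (x : ZMod p × ZMod p) :
    ∑ d : Option (ZMod p), lineCount p S (dirVec p d) x = #S + if x ∈ S then p else 0 := by
  have hsplit : ∀ s : ZMod p × ZMod p,
      (if s = x then p + 1 else 1) = 1 + if s = x then p else 0 := by
    intro s
    split_ifs <;> omega
  calc ∑ d : Option (ZMod p), lineCount p S (dirVec p d) x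
      = ∑ s ∈ S, #{d : Option (ZMod p) | intercept d s = intercept d x} := by
        simp only [lineCount_eq_card_filter_intercept, card_filter]
        exact sum_comm
    _ = #S + if x ∈ S then p else 0 := by
        simp only [card_filter_intercept_eq_intercept, hsplit, sum_add_distrib,
          sum_ite_eq', sum_const, smul_eq_mul, mul_one]

lemma mul_lineCount_of_equidistributed [Fact p.Prime] {S : Finset (ZMod p × ZMod p)}
    {d : Option (ZMod p)} (hd : Equidistributed p S (dirVec p d)) (x : ZMod p × ZMod p) :
    p * lineCount p S (dirVec p d) x = #S :=
  calc p * lineCount p S (dirVec p d) x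
      = ∑ c : ZMod p, lineCount p S (dirVec p d) (basePoint d c) := by
        simp only [hd (basePoint d _) x, sum_const, card_univ, ZMod.card,
          smul_eq_mul]
    _ = #S := by
        simp only [lineCount_eq_card_filter_intercept, intercept_basePoint]
        exact (card_eq_sum_card_fiberwise fun s _ => mem_univ _).symm

lemma lineCount_eq_of_forall_ne_equidistributed [Fact p.Prime] {k : ℕ}
    {S : Finset (ZMod p × ZMod p)} (hcard : #S = k * p) {d₀ : Option (ZMod p)}
    (H : ∀ d, d ≠ d₀ → Equidistributed p S (dirVec p d)) (x : ZMod p × ZMod p) :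
    lineCount p S (dirVec p d₀) x = if x ∈ S then p else 0 := by
  have hp : 0 < p := (Fact.out : p.Prime).pos
  have hothers : ∀ d ∈ univ.erase d₀, lineCount p S (dirVec p d) x = k := fun d hd =>
    Nat.eq_of_mul_eq_mul_left hp <| by
      rw [mul_lineCount_of_equidistributed (H d (ne_of_mem_erase hd)), hcard, mul_comm]
  have hsum := sum_lineCount S x
  rw [← add_sum_erase _ _ (mem_univ d₀), sum_congr rfl hothers,
    sum_const, card_erase_of_mem (mem_univ _), card_univ,
    Fintype.card_option, ZMod.card, smul_eq_mul, Nat.add_sub_cancel, hcard] at hsum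
  split_ifs at hsum ⊢ <;> nlinarith

lemma mem_of_intercept_eq_of_lineCount_eq [Fact p.Prime] {S : Finset (ZMod p × ZMod p)}
    {d : Option (ZMod p)} {x : ZMod p × ZMod p} (hx : lineCount p S (dirVec p d) x = p)
    {w : ZMod p × ZMod p} (hw : intercept d w = intercept d x) : w ∈ S := by
  have hline : #{w ∈ S | intercept d w = intercept d x} = #{w | intercept d w = intercept d x} := by
    rw [← lineCount_eq_card_filter_intercept, hx, card_filter_intercept_eq]
  have heq := eq_of_subset_of_card_le
    (filter_subset_filter _ (subset_univ S)) hline.ge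
  exact (mem_filter.mp (heq ▸ (mem_filter_univ w).2 hw)).1

lemma exists_card_mul_eq_and_eq_biUnion_lines [NeZero p] {S : Finset (ZMod p × ZMod p)}
    {d : Option (ZMod p)} (hsat : ∀ s ∈ S, ∀ w, intercept d w = intercept d s → w ∈ S) :
    ∃ T : Finset (ZMod p × ZMod p), #T * p = #S ∧
      (S : Set (ZMod p × ZMod p)) = ⋃ x ∈ T, {w | ∃ t : ZMod p, w = x + t • dirVec p d} := by
  have hinj : Function.Injective (basePoint (p := p) d) :=
    Function.LeftInverse.injective (intercept_basePoint d)
  refine ⟨(S.image (intercept d)).image (basePoint d), ?_, ?_⟩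
  · rw [card_image_of_injective _ hinj, card_eq_sum_card_image (intercept d) S]
    rw [sum_congr rfl (g := fun _ => p), sum_const, smul_eq_mul]
    intro c hc
    obtain ⟨s, hs, rfl⟩ := mem_image.1 hc
    refine Eq.trans ?_ (card_filter_intercept_eq d (intercept d s))
    congr 1
    ext w
    simpa only [mem_filter, mem_univ, true_and, and_iff_right_iff_imp]
      using hsat s hs w
  · ext w
    simp only [Set.mem_iUnion, Set.mem_ofPred_eq, mem_coe,
      mem_image, exists_eq_add_smul_dirVec_iff]
    constructor
    · exact fun hw => ⟨_, ⟨_, ⟨w, hw, rfl⟩, rfl⟩, (intercept_basePoint d _).symm⟩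
    · rintro ⟨_, ⟨_, ⟨s, hs, rfl⟩, rfl⟩, hws⟩
      exact hsat s hs w (by rwa [intercept_basePoint] at hws)

end EquidistributedDirections

open EquidistributedDirections in
theorem stmt_1_general (p : ℕ) [Fact p.Prime] (k : ℕ)
    (S : Finset (ZMod p × ZMod p)) (hcard : S.card = k * p)
    (h : (specialDirs p S).card ≤ 1) :
    ∃ u : ZMod p × ZMod p, u ≠ 0 ∧ ∃ T : Finset (ZMod p × ZMod p), T.card = k ∧
      (S : Set (ZMod p × ZMod p)) = ⋃ x ∈ T, {w | ∃ t : ZMod p, w = x + t • u} := by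
  obtain ⟨d₀, hd₀⟩ := Finset.card_le_one_iff_subset_singleton.mp h
  have H : ∀ d, d ≠ d₀ → Equidistributed p S (dirVec p d) := fun d hd => by
    by_contra hspecial
    exact hd (Finset.mem_singleton.mp (hd₀ (by simpa [specialDirs] using hspecial)))
  have hsat : ∀ s ∈ S, ∀ w, intercept d₀ w = intercept d₀ s → w ∈ S := fun s hs _ hw =>
    mem_of_intercept_eq_of_lineCount_eq
      (by rw [lineCount_eq_of_forall_ne_equidistributed hcard H, if_pos hs]) hw
  obtain ⟨T, hT, hST⟩ := exists_card_mul_eq_and_eq_biUnion_lines hsat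
  exact ⟨dirVec p d₀, dirVec_ne_zero d₀, T,
    Nat.eq_of_mul_eq_mul_right (Fact.out : p.Prime).pos (hT.trans hcard), hST⟩

theorem stmt_1 (p : ℕ) [Fact p.Prime] (k : ℕ) (hk1 : 1 ≤ k) (hkp : k ≤ p)
    (S : Finset (ZMod p × ZMod p)) (hcard : S.card = k * p)
    (h : (specialDirs p S).card ≤ 1) :
    ∃ u : ZMod p × ZMod p, u ≠ 0 ∧ ∃ T : Finset (ZMod p × ZMod p), T.card = k ∧
      (S : Set (ZMod p × ZMod p)) = ⋃ x ∈ T, {w | ∃ t : ZMod p, w = x + t • u} :=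
  stmt_1_general p k S hcard h
end

section
/- There is no subset S of F_p^2 having exactly 2 special directions. -/
open Finset

lemma exists_lt_of_exists_ne {α M : Type*} [LinearOrder M] {f : α → M}
    (h : ∃ a a', f a ≠ f a') : ∃ a a', f a < f a' := by
  obtain ⟨a, a', hne⟩ := h
  rcases hne.lt_or_gt with hlt | hlt
  exacts [⟨a, a', hlt⟩, ⟨a', a, hlt⟩]

lemma forall_eq_or_forall_eq_of_add_mem_pair {α β M : Type*} [AddCommMonoid M] [LinearOrder M]
    [IsOrderedCancelAddMonoid M] {f : α → M} {g : β → M} {K L : M}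
    (h : ∀ a b, f a + g b = K ∨ f a + g b = L) :
    (∀ a a', f a = f a') ∨ ∀ b b', g b = g b' := by
  by_contra! hfg
  obtain ⟨a, a', ha⟩ := exists_lt_of_exists_ne hfg.1
  obtain ⟨b, b', hb⟩ := exists_lt_of_exists_ne hfg.2
  have h₁ : f a + g b < f a + g b' := by gcongr
  have h₂ : f a + g b' < f a' + g b' := by gcongr
  rcases h a b with e₁ | e₁ <;> rcases h a b' with e₂ | e₂ <;> rcases h a' b' with e₃ | e₃ <;>
    order

section LineCoord

variable {F : Type*}

def lineCoord [CommRing F] : Option F → F × F → F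
  | none => fun x => x.1
  | some m => fun x => x.2 - m * x.1

variable [Field F]

lemma exists_lineCoord_eq_and_lineCoord_eq {d₁ d₂ : Option F} (h : d₁ ≠ d₂) (a b : F) :
    ∃ x, lineCoord d₁ x = a ∧ lineCoord d₂ x = b := by
  match d₁, d₂ with
  | none, none => exact absurd rfl h
  | none, some m => exact ⟨(a, b + m * a), by simp [lineCoord], by simp [lineCoord]⟩
  | some m, none => exact ⟨(b, a + m * b), by simp [lineCoord], by simp [lineCoord]⟩
  | some m, some m' =>
    have hm : m' - m ≠ 0 := sub_ne_zero.2 fun e => h (by rw [e])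
    refine ⟨((a - b) / (m' - m), a + m * ((a - b) / (m' - m))), by simp [lineCoord], ?_⟩
    simp only [lineCoord]
    field_simp
    ring

lemma eq_of_lineCoord_eq_of_lineCoord_eq {d₁ d₂ : Option F} (h : d₁ ≠ d₂) {w x : F × F}
    (h₁ : lineCoord d₁ w = lineCoord d₁ x) (h₂ : lineCoord d₂ w = lineCoord d₂ x) : w = x := by
  match d₁, d₂ with
  | none, none => exact absurd rfl h
  | none, some m =>
    simp only [lineCoord] at h₁ h₂
    exact Prod.ext h₁ (by linear_combination h₂ + m * h₁)
  | some m, none =>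
    simp only [lineCoord] at h₁ h₂
    exact Prod.ext h₂ (by linear_combination h₁ + m * h₂)
  | some m, some m' =>
    have hm : m - m' ≠ 0 := sub_ne_zero.2 fun e => h (by rw [e])
    simp only [lineCoord] at h₁ h₂
    have e₁ : w.1 = x.1 := mul_left_cancel₀ hm (by linear_combination h₂ - h₁)
    exact Prod.ext e₁ (by linear_combination h₁ + m * e₁)

lemma exists_lineCoord_eq (w x : F × F) : ∃ d, lineCoord d w = lineCoord d x := by
  by_cases h : w.1 = x.1
  · exact ⟨none, h⟩
  · refine ⟨some ((w.2 - x.2) / (w.1 - x.1)), ?_⟩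
    have : w.1 - x.1 ≠ 0 := sub_ne_zero.2 h
    simp only [lineCoord]
    field_simp
    ring

lemma card_filter_lineCoord_eq [Fintype F] [DecidableEq F] {w x : F × F} (h : w ≠ x) :
    #{d | lineCoord d w = lineCoord d x} = 1 := by
  obtain ⟨d, hd⟩ := exists_lineCoord_eq w x
  rw [card_eq_one]
  refine ⟨d, eq_singleton_iff_unique_mem.2 ⟨by simpa using hd, fun d' hd' => ?_⟩⟩
  by_contra hne
  exact h (eq_of_lineCoord_eq_of_lineCoord_eq hne (by simpa using hd') hd)

end LineCoord

lemma exists_eq_add_smul_dirVec_iff {p : ℕ} (d : Option (ZMod p)) (w x : ZMod p × ZMod p) :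
    (∃ t : ZMod p, w = x + t • dirVec p d) ↔ lineCoord d w = lineCoord d x := by
  cases d with
  | none =>
    simp only [dirVec, lineCoord, Prod.ext_iff, Prod.fst_add, Prod.snd_add, Prod.smul_fst,
      Prod.smul_snd, smul_eq_mul]
    exact ⟨fun ⟨t, h₁, _⟩ => by simp [h₁], fun h => ⟨w.2 - x.2, by simp [h], by ring⟩⟩
  | some m =>
    simp only [dirVec, lineCoord, Prod.ext_iff, Prod.fst_add, Prod.snd_add, Prod.smul_fst,
      Prod.smul_snd, smul_eq_mul]
    refine ⟨fun ⟨t, h₁, h₂⟩ => by rw [h₁, h₂]; ring, fun h => ⟨w.1 - x.1, by ring, ?_⟩⟩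
    linear_combination h

section LineCount

variable {p : ℕ} [Fact p.Prime] (S : Finset (ZMod p × ZMod p))

lemma lineCount_dirVec (d : Option (ZMod p)) (x : ZMod p × ZMod p) :
    lineCount p S (dirVec p d) x = #{w ∈ S | lineCoord d w = lineCoord d x} := by
  simp only [lineCount, exists_eq_add_smul_dirVec_iff]

lemma equidistributed_of_forall_card_eq (d : Option (ZMod p))
    (h : ∀ a b, #{w ∈ S | lineCoord d w = a} = #{w ∈ S | lineCoord d w = b}) :
    Equidistributed p S (dirVec p d) := fun x y => by
  simp only [lineCount_dirVec, h _ (lineCoord d y)]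

lemma mem_specialDirs {d : Option (ZMod p)} :
    d ∈ specialDirs p S ↔ ¬ Equidistributed p S (dirVec p d) := by
  simp [specialDirs]

lemma sum_lineCount_dirVec (x : ZMod p × ZMod p) :
    ∑ d, lineCount p S (dirVec p d) x = #S + if x ∈ S then p else 0 := by
  have hdirs : #(univ : Finset (Option (ZMod p))) = p + 1 := by simp
  have hcount (w : ZMod p × ZMod p) :
      #{d | lineCoord d w = lineCoord d x} = 1 + if w = x then p else 0 := by
    split_ifs with h
    · simp [h, hdirs, add_comm]
    · simpa using card_filter_lineCoord_eq h
  calc ∑ d, lineCount p S (dirVec p d) x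
      = ∑ w ∈ S, #{d | lineCoord d w = lineCoord d x} := by
        simp only [lineCount_dirVec, card_filter]
        exact sum_comm
    _ = #S + if x ∈ S then p else 0 := by
        simp [hcount, sum_add_distrib]

lemma exists_lineCount_add_lineCount_add_eq {d₁ d₂ : Option (ZMod p)} (hne : d₁ ≠ d₂)
    (hequi : ∀ d ∉ ({d₁, d₂} : Finset _), Equidistributed p S (dirVec p d)) :
    ∃ C, ∀ x, lineCount p S (dirVec p d₁) x + lineCount p S (dirVec p d₂) x + C
      = #S + if x ∈ S then p else 0 := by
  refine ⟨∑ d ∈ univ \ {d₁, d₂}, lineCount p S (dirVec p d) 0, fun x => ?_⟩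
  have hrest : ∑ d ∈ univ \ {d₁, d₂}, lineCount p S (dirVec p d) x
      = ∑ d ∈ univ \ {d₁, d₂}, lineCount p S (dirVec p d) 0 :=
    sum_congr rfl fun d hd => hequi d (mem_sdiff.1 hd).2 x 0
  rw [← sum_lineCount_dirVec, ← sum_sdiff (subset_univ {d₁, d₂}), sum_pair hne, hrest]
  ring

end LineCount

theorem stmt_2 (p : ℕ) [Fact p.Prime] (S : Finset (ZMod p × ZMod p)) :
    (specialDirs p S).card ≠ 2 := by
  intro hcard
  obtain ⟨d₁, d₂, hne, hspecial⟩ := card_eq_two.mp hcard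
  have hequi : ∀ d ∉ ({d₁, d₂} : Finset _), Equidistributed p S (dirVec p d) := fun d hd => by
    by_contra h
    exact hd (hspecial ▸ (mem_specialDirs S).2 h)
  obtain ⟨C, hC⟩ := exists_lineCount_add_lineCount_add_eq S hne hequi
  have htwo_values : ∀ a b, #{w ∈ S | lineCoord d₁ w = a} + #{w ∈ S | lineCoord d₂ w = b}
      = #S - C ∨ #{w ∈ S | lineCoord d₁ w = a} + #{w ∈ S | lineCoord d₂ w = b} = #S + p - C := by
    intro a b
    obtain ⟨x, rfl, rfl⟩ := exists_lineCoord_eq_and_lineCoord_eq hne a b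
    have := hC x
    rw [lineCount_dirVec, lineCount_dirVec] at this
    split_ifs at this <;> omega
  have hnot_equi (d) (hd : d ∈ ({d₁, d₂} : Finset _)) : ¬ Equidistributed p S (dirVec p d) :=
    (mem_specialDirs S).1 (hspecial ▸ hd)
  rcases forall_eq_or_forall_eq_of_add_mem_pair htwo_values with h | h
  · exact hnot_equi d₁ (by simp) (equidistributed_of_forall_card_eq S d₁ h)
  · exact hnot_equi d₂ (by simp) (equidistributed_of_forall_card_eq S d₂ h)
end

section
/- Let S = {(a,b) ∈ F_p^2 : b < a} (coordinates identified with {0,...,p-1}). For every slope m ∈ F_p with m ∉ {0,1}, every line y = mx + c (c ∈ F_p, arithmetic mod p) intersects S in exactly (p-1)/2 points. -/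
/-- The triangle set `{(a,b) : b < a}` with coordinates identified with `{0,…,p-1}`. -/
def triangle (p : ℕ) [Fact p.Prime] : Finset (ZMod p × ZMod p) :=
  Finset.univ.filter fun w => w.2.val < w.1.val

/-!
Along the line `y = m x + c` put `b = m a + c` and `w = (m - 1) a + c`, so that `b = a + w` in
`𝔽_p`. Adding representatives, `b.val + p·[b < a] = a.val + w.val`: the point lies in the
triangle exactly when the addition carries. Since `m ≠ 0` and `m ≠ 1`, both `a ↦ b` and `a ↦ w`
are permutations of `𝔽_p`, so summing over `a` gives `p · #(line ∩ S) = ∑ a.val = p(p-1)/2`.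
-/

open Finset

namespace ZMod

variable {n : ℕ} [NeZero n]

lemma val_add_add_ite_val_lt (a w : ZMod n) :
    (a + w).val + (if (a + w).val < a.val then n else 0) = a.val + w.val := by
  rcases le_or_gt n (a.val + w.val) with hcarry | hno_carry
  · have hsum := val_add_val_of_le hcarry
    have : (a + w).val < a.val := by have := w.val_lt; omega
    rw [if_pos this, hsum]
  · rw [val_add_of_lt hno_carry, if_neg (by omega), add_zero]

lemma sum_val_mul_two : (∑ a : ZMod n, a.val) * 2 = n * (n - 1) := by
  obtain ⟨k, rfl⟩ := Nat.exists_eq_succ_of_ne_zero (NeZero.ne n)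
  rw [← sum_range_id_mul_two]
  exact congrArg (· * 2) (Fin.sum_univ_eq_sum_range id (k + 1))

lemma card_val_lt_mul_eq_sum_val {f : ZMod n → ZMod n} (hf : f.Bijective)
    (hg : (fun a => f a - a).Bijective) :
    #{a | (f a).val < a.val} * n = ∑ a : ZMod n, a.val := by
  have hcarry : ∑ a : ZMod n, ((f a).val + if (f a).val < a.val then n else 0) =
      ∑ a : ZMod n, (a.val + (f a - a).val) :=
    sum_congr rfl fun a _ => by
      simpa only [add_sub_cancel] using val_add_add_ite_val_lt a (f a - a)
  rw [sum_add_distrib, sum_add_distrib, hf.sum_comp val, hg.sum_comp val, sum_ite,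
    sum_const, sum_const_zero, smul_eq_mul] at hcarry
  omega

end ZMod

lemma card_triangle_filter_graph (p : ℕ) [Fact p.Prime] (f : ZMod p → ZMod p) :
    #{w ∈ triangle p | w.2 = f w.1} = #{a : ZMod p | (f a).val < a.val} := by
  refine card_nbij' Prod.fst (fun a => (a, f a)) ?_ ?_ ?_ ?_ <;>
    simp +contextual [Set.MapsTo, Set.LeftInvOn, Set.RightInvOn, triangle]
  rintro a _ hlt rfl
  exact hlt

lemma bijective_mul_add {K : Type*} [DivisionRing K] {m : K} (hm : m ≠ 0) (c : K) :
    (fun a => m * a + c).Bijective :=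
  ((Equiv.mulLeft₀ m hm).trans (Equiv.addRight c)).bijective

theorem stmt_5_general (p : ℕ) [Fact p.Prime] (m : ZMod p)
    (hm0 : m ≠ 0) (hm1 : m ≠ 1) (c : ZMod p) :
    ((triangle p).filter fun w => w.2 = m * w.1 + c).card = (p - 1) / 2 := by
  have hdiff : (fun a : ZMod p => m * a + c - a).Bijective := by
    convert bijective_mul_add (sub_ne_zero.2 hm1) c using 2
    ring
  have hcount := ZMod.card_val_lt_mul_eq_sum_val (bijective_mul_add hm0 c) hdiff
  have hgauss := ZMod.sum_val_mul_two (n := p)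
  rw [card_triangle_filter_graph p fun a => m * a + c]
  rw [← hcount] at hgauss
  have : #{a : ZMod p | (m * a + c).val < a.val} * 2 = p - 1 :=
    Nat.eq_of_mul_eq_mul_left (Fact.out : p.Prime).pos (by rw [← hgauss]; ring)
  omega

theorem stmt_5 (p : ℕ) [Fact p.Prime] (hodd : Odd p) (m : ZMod p)
    (hm0 : m ≠ 0) (hm1 : m ≠ 1) (c : ZMod p) :
    ((triangle p).filter fun w => w.2 = m * w.1 + c).card = (p - 1) / 2 :=
  stmt_5_general p m hm0 hm1 c
end

section
/- Let w ∈ F_p^p be a vector orthogonal (in F_p) to the vectors (j^l)_{j=0,...,p-1} for all l = 0, 1, ..., k where k ≤ p-1. Then w lies in the span of the vectors (j^l)_{j=0,...,p-1} for l = 0, 1, ..., p-2-k. -/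
/-!
Over a finite field with `q` elements, `∑_{i<q} x^i y^(q-1-i)` is `0` if `x = y` and `1`
otherwise (it is `(x^q - y^q)/(x - y)` resp. `q x^(q-1)`). Hence every function `w` is the
polynomial function `w(x) = ∑ₐ w(a) - ∑_{i<q} m_{q-1-i} x^i` with moments `m_l = ∑ₐ w(a) a^l`.
When `m_0, …, m_k` vanish, only the monomials `x^i` with `i ≤ p - 2 - k` survive.
-/

open Finset

namespace FiniteField

variable {K : Type*} [Field K] [Fintype K]

theorem sum_pow_mul_pow_card_sub_one_sub [DecidableEq K] (x y : K) :
    ∑ i ∈ range (Fintype.card K), x ^ i * y ^ (Fintype.card K - 1 - i) =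
      if x = y then 0 else 1 := by
  split_ifs with hxy
  · subst hxy
    have hq : ∀ i ∈ range (Fintype.card K), x ^ i * x ^ (Fintype.card K - 1 - i) =
        x ^ (Fintype.card K - 1) := fun i hi => by
      rw [← pow_add]; congr 1; have := mem_range.mp hi; omega
    rw [sum_congr rfl hq, sum_const, card_range, nsmul_eq_mul, FiniteField.cast_card_eq_zero,
      zero_mul]
  · have h := geom_sum₂_mul x y (Fintype.card K)
    rw [FiniteField.pow_card, FiniteField.pow_card] at h
    exact mul_right_cancel₀ (sub_ne_zero.mpr hxy) (h.trans (one_mul _).symm)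

theorem eq_sum_sub_sum_moment_smul_pow (w : K → K) :
    w = (fun _ => ∑ a, w a) - ∑ i ∈ range (Fintype.card K),
      (∑ a, w a * a ^ (Fintype.card K - 1 - i)) • fun x : K => x ^ i := by
  classical
  funext x
  calc w x = ∑ a, w a * (1 - ∑ i ∈ range (Fintype.card K),
        x ^ i * a ^ (Fintype.card K - 1 - i)) := by
        simp [sum_pow_mul_pow_card_sub_one_sub, apply_ite (HSub.hSub (1 : K))]
    _ = _ := by
        simp only [mul_sub, mul_one, sum_sub_distrib, mul_sum, Pi.sub_apply, Finset.sum_apply,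
          Pi.smul_apply, smul_eq_mul, sum_mul]
        rw [sum_comm]
        congr 1
        refine sum_congr rfl fun i _ => sum_congr rfl fun a _ => by ring

end FiniteField

theorem stmt_16_general (p : ℕ) [Fact p.Prime] (k : ℕ)
    (w : ZMod p → ZMod p)
    (hw : ∀ l : ℕ, l ≤ k → ∑ j : ZMod p, w j * j ^ l = 0) :
    w ∈ Submodule.span (ZMod p)
      {v : ZMod p → ZMod p | ∃ l : ℕ, (l : ℤ) ≤ (p : ℤ) - 2 - k ∧
        v = fun j : ZMod p => j ^ l} := by
  rw [FiniteField.eq_sum_sub_sum_moment_smul_pow w, ZMod.card]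
  have hw0 : ∑ a, w a = 0 := by simpa using hw 0 k.zero_le
  refine sub_mem (by simp only [hw0]; exact zero_mem _) (sum_mem fun i hi => ?_)
  by_cases hik : (i : ℤ) ≤ (p : ℤ) - 2 - k
  · exact Submodule.smul_mem _ _ (Submodule.subset_span ⟨i, hik, rfl⟩)
  · have hi := mem_range.mp hi
    rw [hw _ (by omega), zero_smul]
    exact zero_mem _

theorem stmt_16 (p : ℕ) [Fact p.Prime] (k : ℕ) (hk : k ≤ p - 1)
    (w : ZMod p → ZMod p)
    (hw : ∀ l : ℕ, l ≤ k → ∑ j : ZMod p, w j * j ^ l = 0) :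
    w ∈ Submodule.span (ZMod p)
      {v : ZMod p → ZMod p | ∃ l : ℕ, (l : ℤ) ≤ (p : ℤ) - 2 - k ∧
        v = fun j : ZMod p => j ^ l} :=
  stmt_16_general p k w hw
end

section
/- Let p be a prime, and for 1 ≤ j ≤ p-1 let v_j ∈ ℚ^p be the vector with coordinate 0 equal to 1, coordinate j equal to -1, and all other coordinates 0. Define the cyclic shift v^{(k)}(i) = v(i - k mod p). Then (1/p)·𝟙 + Σ_{i=0}^{p-2} ((p-i-1)/p) · v_j^{(ij)} = e_0, where 𝟙 is the all-ones vector and e_0 the standard basis vector supported at 0. -/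
/-- The vector with value `1` at index `0`, `-1` at index `j` and `0` elsewhere. -/
def vj (p : ℕ) (j x : ZMod p) : ℚ :=
  if x = 0 then 1 else if x = j then -1 else 0

/-! With `c = x / j`, the `i`-th shift `vj (x - i * j)` equals `[i = c] - [i + 1 = c]`, so summation
by parts turns the sum into `[c = 0] - (1/p) · #{i < p | i ≡ c}`, since the weights `(p - i - 1)/p`
drop by `1/p` at each step. Exactly one `i < p` is congruent to `c`, which cancels the `1/p`. -/

open Finset

theorem Finset.sum_range_mul_sub_succ {R : Type*} [CommRing R] (f δ : ℕ → R) (n : ℕ) :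
    ∑ i ∈ range n, f (i + 1) * (δ i - δ (i + 1)) =
      f 0 * δ 0 - f n * δ n + ∑ i ∈ range n, (f (i + 1) - f i) * δ i := by
  induction n with
  | zero => simp
  | succ n ih =>
    rw [sum_range_succ, sum_range_succ, ih]
    ring

theorem ZMod.sum_range_ite_natCast_eq {R : Type*} [AddCommMonoidWithOne R] {n : ℕ} [NeZero n]
    (c : ZMod n) : ∑ i ∈ range n, (if (i : ZMod n) = c then (1 : R) else 0) = 1 := by
  rw [sum_eq_single c.val]
  · simp
  · rintro i hi hne
    rw [if_neg]
    rintro rfl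
    exact hne (ZMod.val_natCast_of_lt (mem_range.1 hi)).symm
  · exact fun h => absurd (mem_range.2 c.val_lt) h

theorem vj_sub_mul {p : ℕ} [Fact p.Prime] {j : ZMod p} (hj : j ≠ 0) (x a : ZMod p) :
    vj p j (x - a * j) = (if a = x / j then 1 else 0) - (if a + 1 = x / j then 1 else 0) := by
  have h0 : x - a * j = 0 ↔ a = x / j := by rw [eq_div_iff hj, sub_eq_zero, eq_comm]
  have h1 : x - a * j = j ↔ a + 1 = x / j := by
    rw [eq_div_iff hj, sub_eq_iff_eq_add, add_mul, one_mul, add_comm, eq_comm]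
  unfold vj
  simp only [h0, h1]
  split_ifs <;> simp_all

theorem stmt_17 (p : ℕ) [Fact p.Prime] (j : ZMod p) (hj : j ≠ 0) :
    (fun x : ZMod p =>
        (1 : ℚ) / p + ∑ i ∈ Finset.range (p - 1),
          (((p : ℚ) - i - 1) / p) * vj p j (x - (i : ZMod p) * j)) =
      fun x : ZMod p => if x = 0 then (1 : ℚ) else 0 := by
  have hp : p.Prime := Fact.out
  have hp0 : (p : ℚ) ≠ 0 := Nat.cast_ne_zero.2 hp.ne_zero
  funext x
  set δ : ℕ → ℚ := fun i => if (i : ZMod p) = x / j then 1 else 0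
  set f : ℕ → ℚ := fun m => ((p : ℚ) - m) / p
  have hterm (i : ℕ) :
      ((p : ℚ) - i - 1) / p * vj p j (x - i * j) = f (i + 1) * (δ i - δ (i + 1)) := by
    rw [vj_sub_mul hj]
    simp only [f, δ]
    push_cast
    ring
  have hstep (i : ℕ) : f (i + 1) - f i = -1 / p := by
    simp only [f]; push_cast; ring
  have hδ0 : δ 0 = if x = 0 then 1 else 0 := by simp [δ, div_eq_zero_iff, hj, eq_comm]
  have hδsum : ∑ i ∈ range (p - 1), δ i + δ (p - 1) = 1 := by
    rw [← sum_range_succ, Nat.sub_add_cancel hp.one_lt.le]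
    exact ZMod.sum_range_ite_natCast_eq _
  have hf0 : f 0 = 1 := by simp [f, hp0]
  have hflast : f (p - 1) = 1 / p := by
    simp only [f]; rw [Nat.cast_sub hp.one_lt.le]; ring
  rw [sum_congr rfl fun i _ => hterm i, sum_range_mul_sub_succ, hf0, hflast, ← hδ0]
  simp only [hstep, ← mul_sum]
  linear_combination (-1 / p : ℚ) * hδsum
end

section
/- Let p be a prime, j, k ∈ {1,...,p-1}, and l with k·l ≡ j (mod p), 1 ≤ l ≤ p-1. With v_j and cyclic shifts as before, (l/p)·𝟙 + Σ_{i=0}^{p-2} ((p-i-1)/p) · v_j^{(ik)} = Σ_{a=0}^{l-1} e_0^{(ak)}, where e_0^{(ak)} is the indicator of index a·k mod p. -/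
open Finset

namespace ZMod

variable {p : ℕ} [NeZero p]

theorem sum_range_ite_natCast_eq_s18 {M : Type*} [AddCommMonoid M] {l : ℕ} (hl : l ≤ p)
    (f : ℕ → M) (y : ZMod p) :
    ∑ i ∈ range l, (if (i : ZMod p) = y then f i else 0) = if y.val < l then f y.val else 0 := by
  have hcast : ∀ i ∈ range l, ((i : ZMod p) = y ↔ i = y.val) := fun i hi =>
    ⟨fun h => h ▸ (val_natCast_of_lt ((mem_range.mp hi).trans_le hl)).symm,
      fun h => h ▸ natCast_zmod_val y⟩
  rw [sum_congr rfl fun i hi => by rw [if_congr (hcast i hi) rfl rfl], sum_ite_eq']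
  simp only [mem_range]

theorem val_sub_natCast_add {l : ℕ} (hl : l < p) (y : ZMod p) :
    (y - l).val + l = y.val + if y.val < l then p else 0 := by
  have hy := val_add (y - (l : ZMod p)) l
  rw [sub_add_cancel, val_natCast_of_lt hl] at hy
  have hlt := (y - l).val_lt
  by_cases hwrap : (y - l).val + l < p
  · rw [Nat.mod_eq_of_lt hwrap] at hy
    split_ifs <;> omega
  · rw [Nat.mod_eq_sub_mod (by omega), Nat.mod_eq_of_lt (by omega)] at hy
    split_ifs <;> omega

end ZMod

theorem vj_eq_sub {p : ℕ} {j : ZMod p} (hj : j ≠ 0) (x : ZMod p) :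
    vj p j x = (if x = 0 then 1 else 0) - if x = j then 1 else 0 := by
  unfold vj
  by_cases hx : x = 0
  · simp [hx, hj.symm]
  · by_cases hxj : x = j <;> simp [hx, hxj, hj]

theorem vj_mul_left {p : ℕ} [Fact p.Prime] {k : ZMod p} (hk : k ≠ 0) (j x : ZMod p) :
    vj p (k * j) (k * x) = vj p j x := by
  simp only [vj, mul_eq_zero, hk, false_or, mul_right_inj' hk]

theorem add_sum_range_weight_mul_vj_sub {p : ℕ} [NeZero p] {l : ℕ} (hl : l < p)
    (hl0 : (l : ZMod p) ≠ 0) (y : ZMod p) :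
    (l : ℚ) / p + ∑ i ∈ range (p - 1), ((p : ℚ) - i - 1) / p * vj p l (y - i) =
      if y.val < l then 1 else 0 := by
  have hp : (p : ℚ) ≠ 0 := Nat.cast_ne_zero.mpr (NeZero.ne p)
  set w : ℕ → ℚ := fun i => ((p : ℚ) - i - 1) / p with hw
  have hvj : ∀ i : ℕ, vj p l (y - i) =
      (if (i : ZMod p) = y then 1 else 0) - if (i : ZMod p) = y - l then 1 else 0 := by
    intro i
    have hzero : y - i = 0 ↔ (i : ZMod p) = y := by rw [sub_eq_zero, eq_comm]
    have hshift : y - i = l ↔ (i : ZMod p) = y - l := by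
      rw [sub_eq_iff_eq_add, eq_sub_iff_add_eq, add_comm, eq_comm]
    simp only [vj_eq_sub hl0, hzero, hshift]
  -- the last weight `w (p - 1)` vanishes, so the sum may run over all residues
  have hextend : ∑ i ∈ range (p - 1), w i * vj p l (y - i) =
      ∑ i ∈ range p, w i * vj p l (y - i) := by
    obtain ⟨n, rfl⟩ : ∃ n, p = n + 1 := Nat.exists_eq_add_one.mpr (NeZero.pos p)
    rw [sum_range_succ, Nat.add_sub_cancel, hw]
    simp
  have hsum : ∑ i ∈ range p, w i * vj p l (y - i) = w y.val - w (y - l).val := by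
    simp only [hvj, mul_sub, mul_ite, mul_one, mul_zero, sum_sub_distrib,
      ZMod.sum_range_ite_natCast_eq_s18 le_rfl, ZMod.val_lt, if_true]
  rw [hextend, hsum, hw]
  have hval : ((y - l).val : ℚ) + l = y.val + if y.val < l then (p : ℚ) else 0 := by
    exact_mod_cast ZMod.val_sub_natCast_add hl y
  split_ifs at hval ⊢ <;>
  · field_simp
    linarith

theorem stmt_18_general (p : ℕ) [Fact p.Prime] (j k : ZMod p) (hj : j ≠ 0) (hk : k ≠ 0)
    (l : ℕ) (hlp : l ≤ p - 1) (hkl : k * (l : ZMod p) = j) :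
    (fun x : ZMod p =>
        (l : ℚ) / p + ∑ i ∈ Finset.range (p - 1),
          (((p : ℚ) - i - 1) / p) * vj p j (x - (i : ZMod p) * k)) =
      fun x : ZMod p => ∑ a ∈ Finset.range l,
        if x = (a : ZMod p) * k then (1 : ℚ) else 0 := by
  have hl : l < p := Nat.lt_of_le_sub_one (Fact.out : p.Prime).pos hlp
  have hl0 : (l : ZMod p) ≠ 0 := right_ne_zero_of_mul (hkl ▸ hj)
  subst hkl
  funext x
  obtain ⟨y, rfl⟩ : ∃ y, x = k * y := ⟨k⁻¹ * x, (mul_inv_cancel_left₀ hk x).symm⟩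
  have hscale : ∀ i : ℕ, vj p (k * l) (k * y - i * k) = vj p l (y - i) := fun i => by
    rw [mul_comm (i : ZMod p) k, ← mul_sub, vj_mul_left hk]
  have hindicator : ∀ a : ℕ, (k * y = a * k ↔ (a : ZMod p) = y) := fun a => by
    rw [mul_comm (a : ZMod p) k, mul_right_inj' hk, eq_comm]
  simp only [hscale, hindicator, ZMod.sum_range_ite_natCast_eq_s18 hl.le]
  exact add_sum_range_weight_mul_vj_sub hl hl0 y

theorem stmt_18 (p : ℕ) [Fact p.Prime] (j k : ZMod p) (hj : j ≠ 0) (hk : k ≠ 0)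
    (l : ℕ) (hl1 : 1 ≤ l) (hlp : l ≤ p - 1) (hkl : k * (l : ZMod p) = j) :
    (fun x : ZMod p =>
        (l : ℚ) / p + ∑ i ∈ Finset.range (p - 1),
          (((p : ℚ) - i - 1) / p) * vj p j (x - (i : ZMod p) * k)) =
      fun x : ZMod p => ∑ a ∈ Finset.range l,
        if x = (a : ZMod p) * k then (1 : ℚ) else 0 :=
  stmt_18_general p j k hj hk l hlp hkl
end

section
/- Let S ⊆ F_p^2 with |S| = kp. If S is equidistributed in all directions of slope m ∈ F_p^* (lines y = mx + b for all b), and (y,0) ∈ S, (0,0) ∉ S, then the vertical line through (y,0) is entirely contained in S. -/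
open Finset

lemma key_count (p : ℕ) [Fact p.Prime] (k : ℕ)
    (S : Finset (ZMod p × ZMod p))
    (hequi : ∀ m : ZMod p, m ≠ 0 → ∀ b : ZMod p,
      (S.filter fun w => w.2 = m * w.1 + b).card = k)
    (c d : ZMod p) :
    (p - 1) * k = (p - 1) * (if (c, d) ∈ S then 1 else 0)
      + (S.filter fun w => w.1 ≠ c ∧ w.2 ≠ d).card := by
  have hM : ((univ.erase (0 : ZMod p))).card = p - 1 := by
    rw [card_erase_of_mem (mem_univ _), card_univ, ZMod.card p]
  calc (p - 1) * k
      = ∑ m ∈ univ.erase (0 : ZMod p),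
          (S.filter fun w => w.2 = m * w.1 + (d - m * c)).card := by
        rw [Finset.sum_congr rfl (fun m hm => hequi m (by simpa using (mem_erase.mp hm).1) _),
          sum_const, hM, smul_eq_mul]
    _ = ∑ m ∈ univ.erase (0 : ZMod p), ∑ w ∈ S,
          if w.2 = m * w.1 + (d - m * c) then 1 else 0 :=
        Finset.sum_congr rfl fun m _ => card_filter _ _
    _ = ∑ w ∈ S, ∑ m ∈ univ.erase (0 : ZMod p),
          if w.2 = m * w.1 + (d - m * c) then 1 else 0 := Finset.sum_comm
    _ = ∑ w ∈ S, ((p - 1) * (if w = (c, d) then 1 else 0)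
          + (if w.1 ≠ c ∧ w.2 ≠ d then 1 else 0)) := by
        refine Finset.sum_congr rfl fun w _ => ?_
        rw [← card_filter]
        by_cases h1 : w.1 = c
        · by_cases h2 : w.2 = d
          · have hw : w = (c, d) := Prod.ext h1 h2
            have : ((univ.erase (0 : ZMod p)).filter
                fun m => w.2 = m * w.1 + (d - m * c)) = univ.erase 0 :=
              filter_true_of_mem fun m _ => by rw [h1, h2]; ring
            rw [this, hM, hw]
            simp
          · have : ((univ.erase (0 : ZMod p)).filter
                fun m => w.2 = m * w.1 + (d - m * c)) = ∅ := by
              refine filter_false_of_mem fun m _ => ?_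
              rw [h1]; intro h; exact h2 (by linear_combination h)
            have hw : w ≠ (c, d) := fun h => h2 (by rw [h])
            rw [this, card_empty, if_neg hw, if_neg (by tauto)]
            simp
        · have hne : w.1 - c ≠ 0 := sub_ne_zero.mpr h1
          have hw : w ≠ (c, d) := fun h => h1 (by rw [h])
          by_cases h2 : w.2 = d
          · have : ((univ.erase (0 : ZMod p)).filter
                fun m => w.2 = m * w.1 + (d - m * c)) = ∅ := by
              refine filter_false_of_mem fun m hm => ?_
              intro h
              have hm0 : m ≠ 0 := by simpa using (mem_erase.mp hm).1
              have : m * (w.1 - c) = 0 := by rw [h2] at h; linear_combination -h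
              exact hm0 ((mul_eq_zero.mp this).resolve_right hne)
            rw [this, card_empty, if_neg hw, if_neg (by tauto)]
            simp
          · have hm0 : (w.2 - d) / (w.1 - c) ≠ 0 := by
              apply div_ne_zero (sub_ne_zero.mpr h2) hne
            have : ((univ.erase (0 : ZMod p)).filter
                fun m => w.2 = m * w.1 + (d - m * c)) = {(w.2 - d) / (w.1 - c)} := by
              ext m
              simp only [mem_filter, mem_erase, mem_univ, true_and, and_true, mem_singleton]
              constructor
              · rintro ⟨-, h⟩
                rw [eq_div_iff hne]
                linear_combination -h
              · rintro rfl
                refine ⟨hm0, ?_⟩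
                have := div_mul_cancel₀ (w.2 - d) hne
                linear_combination -this
            rw [this, card_singleton, if_neg hw, if_pos ⟨h1, h2⟩]
            simp
    _ = (p - 1) * (if (c, d) ∈ S then 1 else 0)
        + (S.filter fun w => w.1 ≠ c ∧ w.2 ≠ d).card := by
        rw [sum_add_distrib, ← mul_sum, card_filter, Finset.sum_ite_eq' S (c, d) (fun _ => 1)]

theorem stmt_19 (p : ℕ) [Fact p.Prime] (k : ℕ) (hk1 : 1 ≤ k) (hkp : k ≤ p)
    (S : Finset (ZMod p × ZMod p)) (hcard : S.card = k * p)
    (hequi : ∀ m : ZMod p, m ≠ 0 → ∀ b : ZMod p,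
      (S.filter fun w => w.2 = m * w.1 + b).card = k)
    (y : ZMod p) (hy : (y, 0) ∈ S) (h0 : (0, 0) ∉ S) :
    ∀ t : ZMod p, (y, t) ∈ S := by
  have hp2 : 2 ≤ p := (Fact.out : p.Prime).two_le
  have hy0 : y ≠ 0 := by rintro rfl; exact h0 hy
  set T : Finset (ZMod p × ZMod p) := S.filter fun w => w.2 ≠ 0 with hT
  have e1 := key_count p k S hequi 0 0
  have e2 := key_count p k S hequi y 0
  rw [if_neg h0] at e1
  rw [if_pos hy] at e2
  have r1 : (S.filter fun w => w.1 ≠ 0 ∧ w.2 ≠ 0) = T.filter fun w => w.1 ≠ 0 := by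
    rw [hT, filter_filter]; exact filter_congr fun w _ => by tauto
  have r2 : (S.filter fun w => w.1 ≠ y ∧ w.2 ≠ 0) = T.filter fun w => w.1 ≠ y := by
    rw [hT, filter_filter]; exact filter_congr fun w _ => by tauto
  rw [r1] at e1
  rw [r2] at e2
  have p1 : (T.filter fun w => w.1 = 0).card + (T.filter fun w => w.1 ≠ 0).card = T.card := by
    simpa using Finset.card_filter_add_card_filter_not (s := T)
      (p := fun w => w.1 = 0)
  have p2 : (T.filter fun w => w.1 = y).card + (T.filter fun w => w.1 ≠ y).card = T.card := by
    simpa using Finset.card_filter_add_card_filter_not (s := T)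
      (p := fun w => w.1 = y)
  -- so card (T.filter (·.1 = y)) ≥ p - 1
  have hge : p - 1 ≤ (T.filter fun w => w.1 = y).card := by omega
  set V : Finset (ZMod p × ZMod p) := (univ.erase (0 : ZMod p)).image fun t => (y, t) with hV
  have hVcard : V.card = p - 1 := by
    rw [hV, card_image_of_injective _ (fun a b h => (Prod.mk.injEq _ _ _ _).mp h |>.2),
      card_erase_of_mem (mem_univ _), card_univ, ZMod.card p]
  have hsub : (T.filter fun w => w.1 = y) ⊆ V := by
    intro w hw
    rw [mem_filter, hT, mem_filter] at hw
    obtain ⟨⟨-, h2⟩, h1⟩ := hw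
    rw [hV, mem_image]
    exact ⟨w.2, by simp [h2], by rw [← h1]⟩
  have heq : (T.filter fun w => w.1 = y) = V :=
    Finset.eq_of_subset_of_card_le hsub (by omega)
  intro t
  by_cases ht : t = 0
  · rw [ht]; exact hy
  · have : (y, t) ∈ V := by
      rw [hV, mem_image]; exact ⟨t, by simp [ht], rfl⟩
    rw [← heq, mem_filter, hT, mem_filter] at this
    exact this.1.1
end
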